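/- arXiv:1512.01187 — 5 statements merged into one kernel-verified Lean document; each statement's English description precedes it below -/
import Mathlib

section
/- Let K and L be regular languages over a finite alphabet Σ with state complexities κ(K) = m ≥ 2 and κ(L) = n ≥ 2. If κ(K ⧢ L) = f(m,n) = 2^{mn−1} + 2^{(m−1)(n−1)}(2^{m−1} − 1)(2^{n−1} − 1), then |Σ| ≥ mn − 1. -/
/-- `IsShuffleOf u v w` means that the word `w` is a shuffle (interleaving)
of the words `u` and `v`. -/
inductive IsShuffleOf {α : Type*} : List α → List α → List α → Prop
  | nil : IsShuffleOf [] [] []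
  | left {a : α} {u v w : List α} : IsShuffleOf u v w → IsShuffleOf (a :: u) v (a :: w)
  | right {a : α} {u v w : List α} : IsShuffleOf u v w → IsShuffleOf u (a :: v) (a :: w)

/-- The shuffle `K ⧢ L` of two languages. -/
def shuffleLang {α : Type*} (K L : Language α) : Language α :=
  {w | ∃ u ∈ K, ∃ v ∈ L, IsShuffleOf u v w}

/-- The shuffle NFA `𝒩` built from two complete DFAs `𝒦` and `ℒ`. -/
def shuffleNFA {α σK σL : Type*} (K : DFA α σK) (L : DFA α σL) : NFA α (σK × σL) where
  step := fun pq a => {(K.step pq.1 a, pq.2), (pq.1, L.step pq.2 a)}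
  start := {(K.start, L.start)}
  accept := {pq | pq.1 ∈ K.accept ∧ pq.2 ∈ L.accept}

/-- `IsStateComplexity L m` says the minimal complete DFA recognizing `L`
has exactly `m` states. -/
def IsStateComplexity {α : Type*} (L : Language α) (m : ℕ) : Prop :=
  (∃ (σ : Type) (_ : Fintype σ) (M : DFA α σ), M.accepts = L ∧ Fintype.card σ = m) ∧
  (∀ (σ : Type) (_ : Fintype σ) (M : DFA α σ), M.accepts = L → m ≤ Fintype.card σ)

/-!
The shuffle `K ⧢ L` is accepted by the subset automaton of the NFA on pairs of states that advances
one component per letter, and by Myhill–Nerode `κ(K ⧢ L)` is at most its number of reachable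
subsets. Every reachable subset meets the row of the start state `s` of `K` and the column of the
start state `t` of `L`; by inclusion–exclusion there are
`2^{mn} - 2^{(m-1)n} - 2^{m(n-1)} + 2^{(m-1)(n-1)} = f(m,n)` such subsets, so if
`κ(K ⧢ L) = f(m,n)` all of them are reachable. For `(i,j) ≠ (s,t)` the subset `{(s,j), (i,t)}`
can only be entered by a letter sending `s` to `i` and `t` to `j`, hence the letters realise all
`mn - 1` pairs other than `(s,t)`.
-/

open Finset

section StateComplexity

variable {α : Type*}

theorem IsStateComplexity.isRegular {L : Language α} {k : ℕ} (h : IsStateComplexity L k) :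
    L.IsRegular :=
  let ⟨σ, hσ, M, hM, _⟩ := h.1
  ⟨σ, hσ, M, hM⟩

theorem IsStateComplexity.le_ncard_range_leftQuotient {L : Language α} {k : ℕ}
    (h : IsStateComplexity L k) : k ≤ (Set.range L.leftQuotient).ncard := by
  have := h.isRegular.finite_range_leftQuotient.to_subtype
  have hk := h.2 _ inferInstance (DFA.reindex (Finite.equivFin _) L.toDFA)
    (by rw [DFA.accepts_reindex, Language.accepts_toDFA])
  rwa [Fintype.card_fin, Nat.card_coe_set_eq] at hk

theorem IsStateComplexity.le_ncard_range_eval {σ : Type*} [Finite σ] {M : DFA α σ} {k : ℕ}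
    (h : IsStateComplexity M.accepts k) : k ≤ (Set.range M.eval).ncard := by
  have hrange : Set.range M.accepts.leftQuotient = M.acceptsFrom '' Set.range M.eval := by
    rw [Language.leftQuotient_accepts, Set.range_comp]
  calc k ≤ (Set.range M.accepts.leftQuotient).ncard := h.le_ncard_range_leftQuotient
    _ ≤ (Set.range M.eval).ncard := hrange ▸ Set.ncard_image_le

end StateComplexity

theorem card_filter_not_disjoint_and_not_disjoint {β : Type*} [Fintype β] [DecidableEq β]
    (A B : Finset β) :
    #{T : Finset β | ¬Disjoint T A ∧ ¬Disjoint T B} + 2 ^ #Aᶜ + 2 ^ #Bᶜ =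
      2 ^ Fintype.card β + 2 ^ #(A ∪ B)ᶜ := by
  have hdisj (C : Finset β) : ({T | Disjoint T C} : Finset (Finset β)) = Cᶜ.powerset := by
    ext T
    simp [Finset.subset_compl_iff_disjoint_right]
  have hcompl : ({T | ¬(¬Disjoint T A ∧ ¬Disjoint T B)} : Finset (Finset β)) =
      Aᶜ.powerset ∪ Bᶜ.powerset := by
    rw [← hdisj, ← hdisj, ← Finset.filter_or]
    simp only [not_and_or, not_not]
  have hinter : Aᶜ.powerset ∩ Bᶜ.powerset = (A ∪ B)ᶜ.powerset := by
    ext T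
    simp only [mem_inter, mem_powerset, compl_union, subset_inter_iff]
  have htotal := Finset.card_filter_add_card_filter_not (s := (univ : Finset (Finset β)))
    (fun T => ¬Disjoint T A ∧ ¬Disjoint T B)
  have hunion := Finset.card_union_add_card_inter Aᶜ.powerset Bᶜ.powerset
  rw [hcompl, card_univ, Fintype.card_finset] at htotal
  rw [hinter, card_powerset, card_powerset, card_powerset] at hunion
  omega

theorem two_pow_shuffle_identity {x m n : ℕ}
    (h : x + 2 ^ (m * (n + 1)) + 2 ^ ((m + 1) * n) = 2 ^ ((m + 1) * (n + 1)) + 2 ^ (m * n)) :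
    x = 2 ^ ((m + 1) * (n + 1) - 1) + 2 ^ (m * n) * (2 ^ m - 1) * (2 ^ n - 1) := by
  have e1 : 2 ^ (m * (n + 1)) = 2 ^ (m * n) * 2 ^ m := by rw [← pow_add]; ring_nf
  have e2 : 2 ^ ((m + 1) * n) = 2 ^ (m * n) * 2 ^ n := by rw [← pow_add]; ring_nf
  have e3 : 2 ^ ((m + 1) * (n + 1)) = 2 * (2 ^ (m * n) * 2 ^ m * 2 ^ n) := by
    rw [← pow_add, ← pow_add, ← pow_succ']; ring_nf
  have e4 : 2 ^ ((m + 1) * (n + 1) - 1) = 2 ^ (m * n) * 2 ^ m * 2 ^ n := by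
    rw [← pow_add, ← pow_add]; congr 1; ring_nf; omega
  rw [e1, e2, e3] at h
  rw [e4]
  zify [Nat.one_le_two_pow (n := m), Nat.one_le_two_pow (n := n)] at h ⊢
  linear_combination h

theorem card_prod_sub_one_le_card_of_forall_exists {ι β γ : Type*} [Fintype ι] [Fintype β]
    [Fintype γ] [DecidableEq β] [DecidableEq γ] (f : ι → β) (g : ι → γ) (b₀ : β) (c₀ : γ)
    (h : ∀ b c, (b, c) ≠ (b₀, c₀) → ∃ x, f x = b ∧ g x = c) :
    Fintype.card β * Fintype.card γ - 1 ≤ Fintype.card ι :=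
  calc Fintype.card β * Fintype.card γ - 1 = #({(b₀, c₀)}ᶜ : Finset (β × γ)) := by
        rw [card_compl, card_singleton, Fintype.card_prod]
    _ ≤ #(univ.image fun x => (f x, g x)) := card_le_card fun ⟨b, c⟩ hbc => by
        obtain ⟨x, rfl, rfl⟩ := h b c (by simpa using hbc)
        exact mem_image_of_mem _ (mem_univ x)
    _ ≤ Fintype.card ι := card_image_le

section Shuffle

variable {α σK σL : Type*} (M : DFA α σK) (N : DFA α σL)

theorem isShuffleOf_nil_iff {u v : List α} : IsShuffleOf u v [] ↔ u = [] ∧ v = [] := by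
  constructor
  · rintro ⟨⟩
    exact ⟨rfl, rfl⟩
  · rintro ⟨rfl, rfl⟩
    exact .nil

theorem mem_stepSet_shuffleNFA {S : Set (σK × σL)} {a : α} {p : σK} {q : σL} :
    (p, q) ∈ (shuffleNFA M N).stepSet S a ↔
      (∃ p', (p', q) ∈ S ∧ M.step p' a = p) ∨ ∃ q', (p, q') ∈ S ∧ N.step q' a = q := by
  simp only [NFA.mem_stepSet, shuffleNFA, Set.mem_insert_iff, Set.mem_singleton_iff,
    Prod.exists, Prod.mk.injEq]
  grind

theorem mem_evalFrom_shuffleNFA (w : List α) (p₀ : σK) (q₀ : σL) (p : σK) (q : σL) :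
    (p, q) ∈ (shuffleNFA M N).evalFrom {(p₀, q₀)} w ↔
      ∃ u v, IsShuffleOf u v w ∧ M.evalFrom p₀ u = p ∧ N.evalFrom q₀ v = q := by
  induction w generalizing p₀ q₀ with
  | nil => simp [isShuffleOf_nil_iff, eq_comm]
  | cons a w ih =>
    have hstep : (shuffleNFA M N).stepSet {(p₀, q₀)} a = {(M.step p₀ a, q₀), (p₀, N.step q₀ a)} :=
      NFA.stepSet_singleton _ _ _
    rw [NFA.evalFrom_cons, hstep, Set.insert_eq, NFA.evalFrom_union, Set.mem_union, ih, ih]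
    constructor
    · rintro (⟨u, v, hs, rfl, rfl⟩ | ⟨u, v, hs, rfl, rfl⟩)
      exacts [⟨a :: u, v, hs.left, rfl, rfl⟩, ⟨u, a :: v, hs.right, rfl, rfl⟩]
    · rintro ⟨_, _, (_ | ⟨hs⟩ | ⟨hs⟩), rfl, rfl⟩
      exacts [.inl ⟨_, _, hs, rfl, rfl⟩, .inr ⟨_, _, hs, rfl, rfl⟩]

theorem shuffleNFA_accepts : (shuffleNFA M N).accepts = shuffleLang M.accepts N.accepts := by
  ext w
  simp only [NFA.mem_accepts, shuffleNFA, Prod.exists]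
  constructor
  · rintro ⟨p, q, ⟨hp, hq⟩, hpq⟩
    obtain ⟨u, v, hs, rfl, rfl⟩ := (mem_evalFrom_shuffleNFA M N w _ _ p q).1 hpq
    exact ⟨u, hp, v, hq, hs⟩
  · rintro ⟨u, hu, v, hv, hs⟩
    exact ⟨_, _, ⟨hu, hv⟩, (mem_evalFrom_shuffleNFA M N w _ _ _ _).2 ⟨u, v, hs, rfl, rfl⟩⟩

def setsMeetingStartRowCol : Set (Set (σK × σL)) :=
  {S | (∃ q, (M.start, q) ∈ S) ∧ ∃ p, (p, N.start) ∈ S}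

theorem range_eval_toDFA_subset_setsMeetingStartRowCol :
    Set.range (shuffleNFA M N).toDFA.eval ⊆ setsMeetingStartRowCol M N := by
  rintro _ ⟨w, rfl⟩
  induction w using List.reverseRecOn with
  | nil => exact ⟨⟨N.start, rfl⟩, ⟨M.start, rfl⟩⟩
  | append_singleton w a ih =>
    obtain ⟨⟨q, hq⟩, ⟨p, hp⟩⟩ := ih
    rw [DFA.eval_append_singleton]
    exact ⟨⟨N.step q a, (mem_stepSet_shuffleNFA M N).2 (.inr ⟨q, hq, rfl⟩)⟩,
      ⟨M.step p a, (mem_stepSet_shuffleNFA M N).2 (.inl ⟨p, hp, rfl⟩)⟩⟩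

theorem ncard_setsMeetingStartRowCol [Fintype σK] [Fintype σL] :
    (setsMeetingStartRowCol M N).ncard =
      2 ^ (Fintype.card σK * Fintype.card σL - 1) +
        2 ^ ((Fintype.card σK - 1) * (Fintype.card σL - 1)) *
          (2 ^ (Fintype.card σK - 1) - 1) * (2 ^ (Fintype.card σL - 1) - 1) := by
  classical
  set A : Finset (σK × σL) := {M.start} ×ˢ univ
  set B : Finset (σK × σL) := univ ×ˢ {N.start}
  set F : Finset (Finset (σK × σL)) := {T | ¬Disjoint T A ∧ ¬Disjoint T B}
  have hsets : setsMeetingStartRowCol M N = (↑) '' (F : Set (Finset (σK × σL))) := by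
    ext S
    refine ⟨fun hS => ⟨(Set.toFinite S).toFinset, ?_, by simp⟩, ?_⟩
    · simpa [F, A, B, Finset.not_disjoint_iff, setsMeetingStartRowCol] using hS
    · rintro ⟨T, hT, rfl⟩
      simpa [F, A, B, Finset.not_disjoint_iff, setsMeetingStartRowCol] using hT
  have hcount := card_filter_not_disjoint_and_not_disjoint A B
  have hA : #Aᶜ = (Fintype.card σK - 1) * Fintype.card σL := by
    rw [show Aᶜ = {M.start}ᶜ ×ˢ univ by ext ⟨p, q⟩; simp [A, eq_comm]]
    simp [card_compl]
  have hB : #Bᶜ = Fintype.card σK * (Fintype.card σL - 1) := by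
    rw [show Bᶜ = univ ×ˢ {N.start}ᶜ by ext ⟨p, q⟩; simp [B, eq_comm]]
    simp [card_compl]
  have hAB : #(A ∪ B)ᶜ = (Fintype.card σK - 1) * (Fintype.card σL - 1) := by
    rw [show (A ∪ B)ᶜ = ({M.start}ᶜ : Finset σK) ×ˢ ({N.start}ᶜ : Finset σL) by
      ext ⟨p, q⟩; simp [A, B, eq_comm]]
    simp [card_compl]
  rw [hsets, Set.ncard_image_of_injective _ Finset.coe_injective, Set.ncard_coe_finset]
  obtain ⟨m, hm⟩ := Nat.exists_eq_add_one.2 (Fintype.card_pos_iff.2 ⟨M.start⟩)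
  obtain ⟨n, hn⟩ := Nat.exists_eq_add_one.2 (Fintype.card_pos_iff.2 ⟨N.start⟩)
  rw [hA, hB, hAB, Fintype.card_prod, hm, hn] at hcount
  rw [hm, hn, Nat.add_sub_cancel, Nat.add_sub_cancel]
  exact two_pow_shuffle_identity (by simpa using hcount)

-- Both successors of each `(p, q) ∈ T` lie in `{(s, j), (i, t)}`, so `T ⊆ {s, i} × {j, t}`;
-- unless `a` sends `s` to `i` and `t` to `j`, the few remaining cases force `T = {(s, j), (i, t)}`.
theorem step_start_eq_of_stepSet_eq_pair {T : Set (σK × σL)}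
    (hT : T ∈ setsMeetingStartRowCol M N) {i : σK} {j : σL} {a : α}
    (hstep : (shuffleNFA M N).stepSet T a = {(M.start, j), (i, N.start)})
    (hne : T ≠ {(M.start, j), (i, N.start)}) :
    M.step M.start a = i ∧ N.step N.start a = j := by
  have hmem (p q) := Set.ext_iff.1 hstep (p, q)
  simp only [mem_stepSet_shuffleNFA, Set.mem_insert_iff, Set.mem_singleton_iff, Prod.mk.injEq]
    at hmem
  have hsucc (p q) (h : (p, q) ∈ T) := And.intro ((hmem _ q).1 (.inl ⟨p, h, rfl⟩))
    ((hmem p _).1 (.inr ⟨q, h, rfl⟩))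
  have hsj := (hmem M.start j).2 (.inl ⟨rfl, rfl⟩)
  have hit := (hmem i N.start).2 (.inr ⟨rfl, rfl⟩)
  obtain ⟨hrow, hcol⟩ := hT
  by_contra hfail
  apply hne
  ext ⟨p, q⟩
  simp only [Set.mem_insert_iff, Set.mem_singleton_iff, Prod.mk.injEq]
  grind

theorem exists_letter_of_pair_mem_range_eval {i : σK} {j : σL}
    (hij : (i, j) ≠ (M.start, N.start))
    (hX : {(M.start, j), (i, N.start)} ∈ Set.range (shuffleNFA M N).toDFA.eval) :
    ∃ a, M.step M.start a = i ∧ N.step N.start a = j := by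
  obtain ⟨w, hw⟩ := hX
  induction w using List.reverseRecOn with
  | nil =>
    have h₀ : ({(M.start, j), (i, N.start)} : Set (σK × σL)) = {(M.start, N.start)} := hw.symm
    have hsj := h₀ ▸ Set.mem_insert (M.start, j) {(i, N.start)}
    have hit := h₀ ▸ Set.mem_insert_of_mem (M.start, j) (Set.mem_singleton (i, N.start))
    simp only [Set.mem_singleton_iff, Prod.mk.injEq] at hsj hit
    exact absurd (by rw [hit.1, hsj.2]) hij
  | append_singleton w a ih =>
    by_cases hprev : (shuffleNFA M N).toDFA.eval w = {(M.start, j), (i, N.start)}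
    · exact ih hprev
    · rw [DFA.eval_append_singleton] at hw
      exact ⟨a, step_start_eq_of_stepSet_eq_pair M N
        (range_eval_toDFA_subset_setsMeetingStartRowCol M N ⟨w, rfl⟩) hw hprev⟩

end Shuffle

theorem stmt_5_general {α : Type*} [Fintype α] (K L : Language α) (m n : ℕ)
    (hK : IsStateComplexity K m) (hL : IsStateComplexity L n)
    (hf : IsStateComplexity (shuffleLang K L)
      (2 ^ (m * n - 1) +
        2 ^ ((m - 1) * (n - 1)) * (2 ^ (m - 1) - 1) * (2 ^ (n - 1) - 1))) :
    m * n - 1 ≤ Fintype.card α := by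
  classical
  obtain ⟨⟨σK, _, M, rfl, rfl⟩, -⟩ := hK
  obtain ⟨⟨σL, _, N, rfl, rfl⟩, -⟩ := hL
  rw [← shuffleNFA_accepts, ← NFA.toDFA_correct, ← ncard_setsMeetingStartRowCol] at hf
  have hreach : Set.range (shuffleNFA M N).toDFA.eval = setsMeetingStartRowCol M N :=
    Set.eq_of_subset_of_ncard_le (range_eval_toDFA_subset_setsMeetingStartRowCol M N)
      hf.le_ncard_range_eval
  refine card_prod_sub_one_le_card_of_forall_exists (M.step M.start) (N.step N.start) _ _
    fun i j hij => exists_letter_of_pair_mem_range_eval M N hij ?_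
  rw [hreach]
  exact ⟨⟨j, Set.mem_insert _ _⟩, ⟨i, Set.mem_insert_of_mem _ rfl⟩⟩

/-- If `κ(K) = m ≥ 2`, `κ(L) = n ≥ 2` and `κ(K ⧢ L) = f(m,n)`, then the alphabet
has at least `mn - 1` letters. -/
theorem stmt_5 {α : Type*} [Fintype α] (K L : Language α) (m n : ℕ)
    (hm : 2 ≤ m) (hn : 2 ≤ n)
    (hK : IsStateComplexity K m) (hL : IsStateComplexity L n)
    (hf : IsStateComplexity (shuffleLang K L)
      (2 ^ (m * n - 1) +
        2 ^ ((m - 1) * (n - 1)) * (2 ^ (m - 1) - 1) * (2 ^ (n - 1) - 1))) :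
    m * n - 1 ≤ Fintype.card α :=
  stmt_5_general K L m n hK hL hf
end

section
/- Let 𝒦 and ℒ be complete DFAs with state sets Q_K = {1,…,m} and Q_L = {1,…,n}, initial states 1 and 1, and let 𝒩 be the shuffle NFA on Q_K × Q_L. Fix s ∈ {2,…,m} and t ∈ {2,…,n}, and let C_{st} = {(s,1),(1,t)}. If S ⊆ Q_K × Q_L is a subset reachable from {(1,1)} in the subset automaton of 𝒩, S ≠ C_{st}, and δ(S,a) = C_{st} for some letter a, then (1,1) ∈ S. -/
/-!
If `(1,1) ∉ S`, then every `(p,q) ∈ S` has `p ∈ {s,1}` and `q ∈ {1,t}`, since both of its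
successors `(δ_K(p,a), q)` and `(p, δ_L(q,a))` lie in `C_{st}`. A reachable `S` contains
`(1, δ_L(1,w))` and `(δ_K(1,w), 1)`, which forces `(1,t), (s,1) ∈ S`; then `(s,1) ↦ C_{st}`
gives `δ_K(s,a) = s`, which rules out `(s,t) ∈ S`, so `S = C_{st}`.
-/

namespace shuffleNFA

variable {α σK σL : Type*} (K : DFA α σK) (L : DFA α σL) {S : Set (σK × σL)} {p : σK} {q : σL}

theorem mem_stepSet_left (a : α) (h : (p, q) ∈ S) :
    (K.step p a, q) ∈ (shuffleNFA K L).stepSet S a :=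
  (shuffleNFA K L).mem_stepSet.mpr ⟨(p, q), h, by simp [shuffleNFA]⟩

theorem mem_stepSet_right (a : α) (h : (p, q) ∈ S) :
    (p, L.step q a) ∈ (shuffleNFA K L).stepSet S a :=
  (shuffleNFA K L).mem_stepSet.mpr ⟨(p, q), h, by simp [shuffleNFA]⟩

theorem mem_evalFrom_left (w : List α) (h : (p, q) ∈ S) :
    (K.evalFrom p w, q) ∈ (shuffleNFA K L).evalFrom S w := by
  induction w generalizing S p with
  | nil => exact h
  | cons a w ih => exact ih (mem_stepSet_left K L a h)

theorem mem_evalFrom_right (w : List α) (h : (p, q) ∈ S) :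
    (p, L.evalFrom q w) ∈ (shuffleNFA K L).evalFrom S w := by
  induction w generalizing S q with
  | nil => exact h
  | cons a w ih => exact ih (mem_stepSet_right K L a h)

theorem eq_pair_of_stepSet_eq_pair {a : α} {s p₀ : σK} {t q₀ : σL} (hs : s ≠ p₀) (ht : t ≠ q₀)
    (hstep : (shuffleNFA K L).stepSet S a = {(s, q₀), (p₀, t)}) (hcorner : (p₀, q₀) ∉ S)
    (hcol : (p₀, q) ∈ S) (hrow : (p, q₀) ∈ S) :
    S = {(s, q₀), (p₀, t)} := by
  have hleft : ∀ {p q}, (p, q) ∈ S →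
      (K.step p a = s ∧ q = q₀) ∨ (K.step p a = p₀ ∧ q = t) := fun h => by
    simpa [hstep] using mem_stepSet_left K L a h
  have hright : ∀ {p q}, (p, q) ∈ S →
      (p = s ∧ L.step q a = q₀) ∨ (p = p₀ ∧ L.step q a = t) := fun h => by
    simpa [hstep] using mem_stepSet_right K L a h
  have hp₀t : (p₀, t) ∈ S := by
    rcases hleft hcol with ⟨-, rfl⟩ | ⟨-, rfl⟩
    exacts [absurd hcol hcorner, hcol]
  have hsq₀ : (s, q₀) ∈ S := by
    rcases hright hrow with ⟨rfl, -⟩ | ⟨rfl, -⟩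
    exacts [hrow, absurd hrow hcorner]
  have hKs : K.step s a = s := by
    rcases hleft hsq₀ with ⟨h, -⟩ | ⟨-, h⟩
    exacts [h, absurd h.symm ht]
  refine (Set.insert_subset hsq₀ (Set.singleton_subset_iff.mpr hp₀t)).antisymm' fun ⟨p, q⟩ h => ?_
  rcases hright h with ⟨rfl, -⟩ | ⟨rfl, -⟩ <;> rcases hleft h with ⟨hK, rfl⟩ | ⟨hK, rfl⟩
  · exact .inl rfl
  · exact absurd (hKs ▸ hK) hs
  · exact absurd h hcorner
  · exact .inr rfl

end shuffleNFA

theorem stmt_7_general {α : Type*} {m n : ℕ} [NeZero m] [NeZero n]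
    (K : DFA α (Fin m)) (L : DFA α (Fin n))
    (s : Fin m) (hs : s ≠ 0) (t : Fin n) (ht : t ≠ 0)
    (S : Set (Fin m × Fin n)) (w : List α)
    (hreach : S = (shuffleNFA K L).evalFrom {((0 : Fin m), (0 : Fin n))} w)
    (a : α)
    (hne : S ≠ {(s, (0 : Fin n)), ((0 : Fin m), t)})
    (hstep : (shuffleNFA K L).stepSet S a = {(s, (0 : Fin n)), ((0 : Fin m), t)}) :
    ((0 : Fin m), (0 : Fin n)) ∈ S := by
  by_contra hcorner
  have hcol : ((0 : Fin m), L.evalFrom 0 w) ∈ S :=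
    hreach ▸ shuffleNFA.mem_evalFrom_right K L w rfl
  have hrow : (K.evalFrom 0 w, (0 : Fin n)) ∈ S :=
    hreach ▸ shuffleNFA.mem_evalFrom_left K L w rfl
  exact hne (shuffleNFA.eq_pair_of_stepSet_eq_pair K L hs ht hstep hcorner hcol hrow)

/-- If a reachable subset `S` of the subset automaton of the shuffle NFA goes to
`C_{st} = {(s,1),(1,t)}` (with `s ≠ 1`, `t ≠ 1`) on some letter `a`, and `S ≠ C_{st}`,
then `(1,1) ∈ S`.  Here states are numbered so that 1 becomes `0 : Fin m`. -/
theorem stmt_7 {α : Type*} {m n : ℕ} [NeZero m] [NeZero n]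
    (K : DFA α (Fin m)) (L : DFA α (Fin n))
    (hK : K.start = 0) (hL : L.start = 0)
    (s : Fin m) (hs : s ≠ 0) (t : Fin n) (ht : t ≠ 0)
    (S : Set (Fin m × Fin n)) (w : List α)
    (hreach : S = (shuffleNFA K L).evalFrom {((0 : Fin m), (0 : Fin n))} w)
    (a : α)
    (hne : S ≠ {(s, (0 : Fin n)), ((0 : Fin m), t)})
    (hstep : (shuffleNFA K L).stepSet S a = {(s, (0 : Fin n)), ((0 : Fin m), t)}) :
    ((0 : Fin m), (0 : Fin n)) ∈ S :=
  stmt_7_general K L s hs t ht S w hreach a hne hstep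
end

section
/- Let φ be a permutation of the m rows Q_m. Let S be a valid subset of Q_m × Q_n such that for every column set U ∈ cols(S) the whole equivalence class [U]_φ is contained in cols(S), and such that some V ∈ cols(S) satisfies |[V]_φ| ≥ 2. Assume that every valid subset S′ of Q_{m′} × Q_{n′} with m′ < m, or n′ < n, or |S′| < |S| is reachable in the extremal subset automaton 𝒟_{m′,n′}. Then S is reachable in 𝒟_{m,n}. -/
/-- The extremal shuffle NFA `𝒩_{m,n}`: its alphabet `Σ_{m,n}` has one letter for
every pair of transformations of `Q_m = Fin m` and `Q_n = Fin n`, its state set is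
`Q_m × Q_n`, its initial state is `(1,1)` (here `(0,0)`), and a letter
`a = (s,t)` takes `(p,q)` to `{(s p, q), (p, t q)}`. -/
def extremalNFA (m n : ℕ) :
    NFA ((Fin m → Fin m) × (Fin n → Fin n)) (Fin m × Fin n) where
  step := fun pq a => {(a.1 pq.1, pq.2), (pq.1, a.2 pq.2)}
  start := {pq | pq.1.val = 0 ∧ pq.2.val = 0}
  accept := ∅

/-- A subset `S ⊆ Q_m × Q_n` is valid if it contains a state in column 1
and a state in row 1 (Condition (C)). -/
def ValidSubset {m n : ℕ} (S : Set (Fin m × Fin n)) : Prop :=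
  (∃ p ∈ S, p.2.val = 0) ∧ (∃ p ∈ S, p.1.val = 0)

/-- `S` is reachable in the subset automaton `𝒟_{m,n}` of the extremal shuffle NFA,
i.e. it is obtained from the initial subset `{(1,1)}` by reading some word. -/
def ReachableIn {m n : ℕ} (S : Set (Fin m × Fin n)) : Prop :=
  ∃ w : List ((Fin m → Fin m) × (Fin n → Fin n)),
    S = (extremalNFA m n).evalFrom (extremalNFA m n).start w

/-- The set of rows appearing in column `j` of `S`. -/
def colSet {m n : ℕ} (S : Set (Fin m × Fin n)) (j : Fin n) : Set (Fin m) :=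
  {i | (i, j) ∈ S}

/-- The collection of column sets of `S`. -/
def colsSet {m n : ℕ} (S : Set (Fin m × Fin n)) : Set (Set (Fin m)) :=
  {U | ∃ j : Fin n, U = colSet S j}

/-- The equivalence class `[U]_φ` of a subset `U ⊆ Q_m` of rows under a
permutation `φ` of the rows. -/
def permClass {m : ℕ} (φ : Equiv.Perm (Fin m)) (U : Set (Fin m)) : Set (Set (Fin m)) :=
  {V | ∃ i : ℕ, V = (⇑(φ ^ i)) '' U}

/-! Write `S_k = {(p, q) | (φ^k p, q) ∈ S}`. Since `cols(S)` is closed under `φ⁻¹`, some `τ`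
satisfies `col(S, τ q) = φ⁻¹(col(S, q))`, and the letter `(φ, τ)` maps `S_{k+1}` onto `S_k`; so it
suffices to reach some `S_K`. Pick a column `c ≠ 1` that `φ` moves (a class of size `≥ 2` gives
one) and a column `b` with `col(S, b) = φ(col(S, c))`. Deleting column `c` from `S_{K+1}` leaves a
valid set, for a suitable `K`, with fewer states than `S`, hence reachable by induction, and the
letter `(φ, τ[b ↦ c])` maps it onto `S_K`: column `b` regrows the deleted column `c`. -/

open Set Function Equiv

section
variable {m n : ℕ}

lemma extremalNFA_stepSet (T : Set (Fin m × Fin n)) (a : (Fin m → Fin m) × (Fin n → Fin n)) :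
    (extremalNFA m n).stepSet T a = Prod.map a.1 id '' T ∪ Prod.map id a.2 '' T := by
  ext x
  simp only [NFA.mem_stepSet, extremalNFA, mem_insert_iff, mem_singleton_iff, mem_union,
    mem_image, Prod.map]
  constructor
  · rintro ⟨p, hp, rfl | rfl⟩
    exacts [Or.inl ⟨p, hp, rfl⟩, Or.inr ⟨p, hp, rfl⟩]
  · rintro (⟨p, hp, rfl⟩ | ⟨p, hp, rfl⟩)
    exacts [⟨p, hp, Or.inl rfl⟩, ⟨p, hp, Or.inr rfl⟩]

lemma ReachableIn.stepSet {T : Set (Fin m × Fin n)} (h : ReachableIn T)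
    (a : (Fin m → Fin m) × (Fin n → Fin n)) :
    ReachableIn ((extremalNFA m n).stepSet T a) := by
  obtain ⟨w, rfl⟩ := h
  exact ⟨w ++ [a], by rw [NFA.evalFrom_append, NFA.evalFrom_singleton]⟩

lemma colSet_preimage_prodMap (f : Fin m → Fin m) (R : Set (Fin m × Fin n)) (q : Fin n) :
    colSet (Prod.map f id ⁻¹' R) q = f ⁻¹' colSet R q :=
  rfl

lemma preimage_prodMap_pow_succ (φ : Perm (Fin m)) (R : Set (Fin m × Fin n)) (k : ℕ) :
    Prod.map ⇑(φ ^ (k + 1)) id ⁻¹' R = Prod.map φ id ⁻¹' (Prod.map ⇑(φ ^ k) id ⁻¹' R) := by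
  rw [pow_succ, Perm.coe_mul, ← preimage_comp, Prod.map_comp_map, id_comp]

lemma preimage_colSet_preimage_pow {φ : Perm (Fin m)} {R : Set (Fin m × Fin n)} {b c : Fin n}
    (h : ⇑φ ⁻¹' colSet R b = colSet R c) (k : ℕ) :
    ⇑φ ⁻¹' colSet (Prod.map ⇑(φ ^ k) id ⁻¹' R) b = colSet (Prod.map ⇑(φ ^ k) id ⁻¹' R) c := by
  rw [colSet_preimage_prodMap, colSet_preimage_prodMap, ← h, ← preimage_comp, ← preimage_comp,
    ← Perm.coe_mul, ← Perm.coe_mul, (Commute.self_pow φ k).eq]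

lemma stepSet_preimage_prodMap (R : Set (Fin m × Fin n)) (φ : Perm (Fin m)) (t : Fin n → Fin n)
    (ht : ∀ q, ⇑φ ⁻¹' colSet R q ⊆ colSet R (t q)) :
    (extremalNFA m n).stepSet (Prod.map φ id ⁻¹' R) (φ, t) = R := by
  rw [extremalNFA_stepSet, image_preimage_eq _ (φ.surjective.prodMap surjective_id),
    union_eq_left]
  rintro _ ⟨⟨p, q⟩, hpq, rfl⟩
  exact ht q hpq

lemma stepSet_preimage_prodMap_inter_ne (R : Set (Fin m × Fin n)) (φ : Perm (Fin m))
    (t : Fin n → Fin n) (ht : ∀ q, ⇑φ ⁻¹' colSet R q ⊆ colSet R (t q)) {b c : Fin n}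
    (hbc : b ≠ c) (htb : t b = c) (hc : colSet R c ⊆ ⇑φ ⁻¹' colSet R b) :
    (extremalNFA m n).stepSet (Prod.map φ id ⁻¹' R ∩ {p | p.2 ≠ c}) (φ, t) = R := by
  refine subset_antisymm ?_ fun ⟨p, q⟩ hpq => ?_
  · calc _ ⊆ (extremalNFA m n).stepSet (Prod.map φ id ⁻¹' R) (φ, t) := by
          rw [extremalNFA_stepSet, extremalNFA_stepSet]
          exact union_subset_union (image_mono inter_subset_left) (image_mono inter_subset_left)
      _ = R := stepSet_preimage_prodMap R φ t ht
  rw [extremalNFA_stepSet]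
  by_cases hq : q = c
  · subst hq
    exact Or.inr ⟨(p, b), ⟨hc hpq, hbc⟩, by simp [htb]⟩
  · exact Or.inl ⟨(φ.symm p, q), ⟨by simpa using hpq, hq⟩, by simp⟩

lemma ReachableIn.of_preimage_prodMap_pow {R : Set (Fin m × Fin n)} {φ : Perm (Fin m)}
    {τ : Fin n → Fin n} (hτ : ∀ q, ⇑φ ⁻¹' colSet R q = colSet R (τ q)) :
    ∀ k : ℕ, ReachableIn (Prod.map ⇑(φ ^ k) id ⁻¹' R) → ReachableIn R
  | 0, h => by simpa using h
  | k + 1, h => by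
    refine ReachableIn.of_preimage_prodMap_pow hτ k ?_
    rw [← stepSet_preimage_prodMap _ φ τ fun q => (preimage_colSet_preimage_pow (hτ q) k).le]
    exact (preimage_prodMap_pow_succ φ R k ▸ h).stepSet _

lemma ReachableIn.of_preimage_prodMap_inter_ne {R : Set (Fin m × Fin n)} {φ : Perm (Fin m)}
    {τ : Fin n → Fin n} (hτ : ∀ q, ⇑φ ⁻¹' colSet R q ⊆ colSet R (τ q)) {b c : Fin n}
    (hbc : b ≠ c) (hb : ⇑φ ⁻¹' colSet R b = colSet R c)
    (h : ReachableIn (Prod.map φ id ⁻¹' R ∩ {p | p.2 ≠ c})) : ReachableIn R := by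
  have ht : ∀ q, ⇑φ ⁻¹' colSet R q ⊆ colSet R (update τ b c q) := by
    intro q
    rcases eq_or_ne q b with rfl | hq
    · simpa using hb.le
    · simpa [hq] using hτ q
  rw [← stepSet_preimage_prodMap_inter_ne R φ _ ht hbc (update_self b c τ) hb.ge]
  exact h.stepSet _

lemma ncard_preimage_prodMap_inter_ne_lt (ψ : Perm (Fin m)) {S : Set (Fin m × Fin n)} {c : Fin n}
    (hc : (colSet S c).Nonempty) : (Prod.map ψ id ⁻¹' S ∩ {p | p.2 ≠ c}).ncard < S.ncard := by
  obtain ⟨i, hi⟩ := hc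
  have hbij : Bijective (Prod.map ψ (id : Fin n → Fin n)) := ψ.bijective.prodMap bijective_id
  calc _ < (Prod.map ψ id ⁻¹' S).ncard := by
        refine ncard_lt_ncard ((ssubset_iff_of_subset inter_subset_left).2 ?_)
        exact ⟨(ψ.symm i, c), by simpa [colSet] using hi, fun h => h.2 rfl⟩
    _ = S.ncard := ncard_preimage_of_injective_subset_range hbij.1 (hbij.2.range_eq ▸ subset_univ S)

end

section
variable {m : ℕ} (φ : Perm (Fin m)) (U : Set (Fin m))

lemma image_mem_permClass : ⇑φ '' U ∈ permClass φ U :=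
  ⟨1, by rw [pow_one]⟩

lemma preimage_mem_permClass : ⇑φ ⁻¹' U ∈ permClass φ U := by
  obtain ⟨i, hi⟩ := (mem_powers_iff_mem_zpowers.2 (inv_mem (Subgroup.mem_zpowers φ)) :
    φ⁻¹ ∈ Submonoid.powers φ)
  exact ⟨i, by rw [show φ ^ i = φ⁻¹ from hi, Perm.coe_inv, image_symm_eq_preimage]⟩

lemma permClass_eq_singleton (h : ⇑φ '' U = U) : permClass φ U = {U} := by
  have hpow : ∀ i : ℕ, ⇑(φ ^ i) '' U = U := by
    intro i
    induction i with
    | zero => simp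
    | succ i ih => rw [pow_succ', Perm.coe_mul, image_comp, ih, h]
  ext V
  simp [permClass, hpow]

variable {φ U} in
lemma image_ne_of_two_le_ncard_permClass (h : 2 ≤ (permClass φ U).ncard) : ⇑φ '' U ≠ U := by
  intro hU
  rw [permClass_eq_singleton φ U hU, ncard_singleton] at h
  omega

end

section
variable {m n : ℕ} {S : Set (Fin m × Fin n)} {φ : Perm (Fin m)}

lemma exists_colSet_image_ne (himage : ∀ U ∈ colsSet S, ⇑φ '' U ∈ colsSet S)
    (hV : ∃ V ∈ colsSet S, ⇑φ '' V ≠ V) (z : Fin n) :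
    ∃ c ≠ z, ⇑φ '' colSet S c ≠ colSet S c := by
  obtain ⟨_, ⟨j, rfl⟩, hj⟩ := hV
  obtain ⟨k, hk⟩ := himage _ ⟨j, rfl⟩
  rcases eq_or_ne j z with rfl | hjz
  · refine ⟨k, ?_, fun h => hj (image_injective.2 φ.injective ?_)⟩
    · rintro rfl
      exact hj hk
    · rwa [← hk] at h
  · exact ⟨j, hjz, hj⟩

lemma exists_pow_succ_apply_mem_ne {b c : Fin n} (hbc : b ≠ c)
    (hb : ⇑φ ⁻¹' colSet S b = colSet S c) {i : Fin m} {c₀ : Fin n} (hi : (i, c₀) ∈ S) :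
    ∃ K c', c' ≠ c ∧ ((φ ^ (K + 1)) i, c') ∈ S := by
  rcases eq_or_ne c₀ c with rfl | hc₀
  · exact ⟨0, b, hbc, by rw [zero_add, pow_one]; exact hb.ge hi⟩
  · refine ⟨orderOf φ - 1, c₀, hc₀, ?_⟩
    rwa [Nat.sub_add_cancel (orderOf_pos φ), pow_orderOf_eq_one, Perm.one_apply]

end

/-- Let `φ` be a permutation of the `m` rows and let `S` be a valid subset whose
collection of columns is a union of full equivalence classes under `φ`, with at
least one class of size at least 2. If every valid subset `S'` of `Q_{m'} × Q_{n'}`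
with `m' < m`, or `n' < n`, or `|S'| < |S|` is reachable in `𝒟_{m',n'}`,
then `S` is reachable in `𝒟_{m,n}`. -/
theorem stmt_12 {m n : ℕ} (φ : Equiv.Perm (Fin m)) (S : Set (Fin m × Fin n))
    (hvalid : ValidSubset S)
    (hclosed : ∀ U ∈ colsSet S, permClass φ U ⊆ colsSet S)
    (hbig : ∃ V ∈ colsSet S, 2 ≤ (permClass φ V).ncard)
    (ih : ∀ (m' n' : ℕ) (S' : Set (Fin m' × Fin n')), ValidSubset S' →
      (m' < m ∨ n' < n ∨ S'.ncard < S.ncard) → ReachableIn S') :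
    ReachableIn S := by
  obtain ⟨⟨⟨i₀, z⟩, hz, hz0⟩, ⟨⟨r, c₀⟩, hr, hr0⟩⟩ := hvalid
  have himage : ∀ U ∈ colsSet S, ⇑φ '' U ∈ colsSet S :=
    fun U hU => hclosed U hU (image_mem_permClass φ U)
  choose τ hτ using fun q => hclosed _ ⟨q, rfl⟩ (preimage_mem_permClass φ (colSet S q))
  obtain ⟨V, hV, hV2⟩ := hbig
  obtain ⟨c, hcz, hc⟩ :=
    exists_colSet_image_ne himage ⟨V, hV, image_ne_of_two_le_ncard_permClass hV2⟩ z
  have hcne : (colSet S c).Nonempty := nonempty_iff_ne_empty.2 fun h => hc (by rw [h, image_empty])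
  obtain ⟨b, hb⟩ := himage _ ⟨c, rfl⟩
  have hbc : b ≠ c := by
    rintro rfl
    exact hc hb
  have hbc' : ⇑φ ⁻¹' colSet S b = colSet S c := by rw [← hb, preimage_image_eq _ φ.injective]
  obtain ⟨K, c', hc'c, hrc'⟩ := exists_pow_succ_apply_mem_ne hbc hbc' hr
  refine ReachableIn.of_preimage_prodMap_pow hτ K <|
    ReachableIn.of_preimage_prodMap_inter_ne (fun q => (preimage_colSet_preimage_pow (hτ q) K).le)
      hbc (preimage_colSet_preimage_pow hbc' K) ?_
  rw [← preimage_prodMap_pow_succ]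
  refine ih m n _ ⟨⟨((φ ^ (K + 1)).symm i₀, z), ⟨by simpa using hz, hcz.symm⟩, hz0⟩,
    ⟨(r, c'), ⟨hrc', hc'c⟩, hr0⟩⟩ (Or.inr (Or.inr (ncard_preimage_prodMap_inter_ne_lt _ hcne)))
end

section
/- For all integers m, n ≥ 2, there exist languages K and L over the three-letter alphabet {a, b, c} with state complexities κ(K) = m and κ(L) = n such that in the subset automaton of the shuffle NFA 𝒩 for K ⧢ L, no two distinct subsets of the state set Q_K × Q_L are equivalent; in particular, all 2^{mn} subsets are pairwise distinguishable. -/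
/-! `K` counts `a`s and `c`s modulo `m` and is reset to `0` by `b`; `L` counts `b`s modulo `n` and
is sent to `0` by `a` and to `1` by `c`. Given a state `(i, j)`, pick `x ∈ {a, c}` sending `L` to
some `r ≠ j`, and read `x ^ (m - 1 - i) b ^ (n - 1 - j)` in the shuffle NFA from `{(p, q)}`. Once
`K` reads a `b` it is stuck at `0`, and once `L` reads an `x` the remaining `b`s take it from `r`
past `n - 1`; so an accepting run gives all `x`s to `K` and all `b`s to `L`, which forces
`(p, q) = (i, j)`. As acceptance from a subset means acceptance from one of its elements, this word
separates any two subsets that differ at `(i, j)`. Both automata are minimal because the powers of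
a counting letter reach `m` (resp. `n`) pairwise distinguishable states. -/

namespace IsShuffleOf

variable {α : Type*} {a : α} {u v w : List α}

theorem cons_iff :
    IsShuffleOf u v (a :: w) ↔
      (∃ u', u = a :: u' ∧ IsShuffleOf u' v w) ∨ (∃ v', v = a :: v' ∧ IsShuffleOf u v' w) := by
  constructor
  · rintro (_ | ⟨h⟩ | ⟨h⟩)
    exacts [Or.inl ⟨_, rfl, h⟩, Or.inr ⟨_, rfl, h⟩]
  · rintro (⟨u', rfl, h⟩ | ⟨v', rfl, h⟩)
    exacts [h.left, h.right]

theorem nil_iff : IsShuffleOf u v [] ↔ u = [] ∧ v = [] := by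
  constructor
  · rintro ⟨⟩
    exact ⟨rfl, rfl⟩
  · rintro ⟨rfl, rfl⟩
    exact nil

theorem nil_left (v : List α) : IsShuffleOf [] v v := by
  induction v with
  | nil => exact nil
  | cons a v ih => exact ih.right

theorem append (u v : List α) : IsShuffleOf u v (u ++ v) := by
  induction u with
  | nil => exact nil_left v
  | cons a u ih => exact ih.left

theorem of_append {w₁ w₂ : List α} (h : IsShuffleOf u v (w₁ ++ w₂)) :
    ∃ u₁ u₂ v₁ v₂, u = u₁ ++ u₂ ∧ v = v₁ ++ v₂ ∧
      IsShuffleOf u₁ v₁ w₁ ∧ IsShuffleOf u₂ v₂ w₂ := by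
  induction w₁ generalizing u v with
  | nil => exact ⟨[], u, [], v, rfl, rfl, nil, h⟩
  | cons a w₁ ih =>
    rcases cons_iff.mp h with ⟨u', rfl, h'⟩ | ⟨v', rfl, h'⟩
    · obtain ⟨u₁, u₂, v₁, v₂, rfl, rfl, h₁, h₂⟩ := ih h'
      exact ⟨a :: u₁, u₂, v₁, v₂, rfl, rfl, h₁.left, h₂⟩
    · obtain ⟨u₁, u₂, v₁, v₂, rfl, rfl, h₁, h₂⟩ := ih h'
      exact ⟨u₁, u₂, a :: v₁, v₂, rfl, rfl, h₁.right, h₂⟩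

theorem of_replicate {s : ℕ} (h : IsShuffleOf u v (List.replicate s a)) :
    ∃ s₁ s₂, u = List.replicate s₁ a ∧ v = List.replicate s₂ a ∧ s₁ + s₂ = s := by
  induction s generalizing u v with
  | zero =>
    obtain ⟨rfl, rfl⟩ := nil_iff.mp h
    exact ⟨0, 0, rfl, rfl, rfl⟩
  | succ s ih =>
    rcases cons_iff.mp h with ⟨u', rfl, h'⟩ | ⟨v', rfl, h'⟩
    · obtain ⟨s₁, s₂, rfl, rfl, rfl⟩ := ih h'
      exact ⟨s₁ + 1, s₂, rfl, rfl, by omega⟩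
    · obtain ⟨s₁, s₂, rfl, rfl, rfl⟩ := ih h'
      exact ⟨s₁, s₂ + 1, rfl, rfl, by omega⟩

end IsShuffleOf

section ShuffleNFA

variable {α σK σL : Type*} (K : DFA α σK) (L : DFA α σL)

theorem mem_shuffleNFA_evalFrom_singleton (p : σK) (q : σL) (w : List α) (z : σK × σL) :
    z ∈ (shuffleNFA K L).evalFrom {(p, q)} w ↔
      ∃ u v, IsShuffleOf u v w ∧ (K.evalFrom p u, L.evalFrom q v) = z := by
  induction w generalizing p q with
  | nil => simp [IsShuffleOf.nil_iff, eq_comm]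
  | cons a w ih =>
    have hstep : (shuffleNFA K L).stepSet {(p, q)} a = {(K.step p a, q)} ∪ {(p, L.step q a)} :=
      NFA.stepSet_singleton _ _ _
    simp only [NFA.evalFrom_cons, hstep, NFA.evalFrom_union, Set.mem_union, ih,
      IsShuffleOf.cons_iff]
    constructor
    · rintro (⟨u, v, h, rfl⟩ | ⟨u, v, h, rfl⟩)
      exacts [⟨a :: u, v, Or.inl ⟨u, rfl, h⟩, rfl⟩, ⟨u, a :: v, Or.inr ⟨v, rfl, h⟩, rfl⟩]
    · rintro ⟨_, _, ⟨u, rfl, h⟩ | ⟨v, rfl, h⟩, rfl⟩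
      exacts [Or.inl ⟨u, _, h, rfl⟩, Or.inr ⟨_, v, h, rfl⟩]

theorem shuffleNFA_acceptsFrom_singleton (p : σK) (q : σL) :
    (shuffleNFA K L).acceptsFrom {(p, q)} = shuffleLang (K.acceptsFrom p) (L.acceptsFrom q) := by
  ext w
  simp only [NFA.mem_acceptsFrom, mem_shuffleNFA_evalFrom_singleton]
  constructor
  · rintro ⟨_, ⟨hK, hL⟩, u, v, h, rfl⟩
    exact ⟨u, hK, v, hL, h⟩
  · rintro ⟨u, hu, v, hv, h⟩
    exact ⟨(K.evalFrom p u, L.evalFrom q v), ⟨hu, hv⟩, u, v, h, rfl⟩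

end ShuffleNFA

theorem NFA.evalFrom_inter_accept_nonempty_iff {α σ : Type*} (M : NFA α σ) (S : Set σ)
    (w : List α) : (M.evalFrom S w ∩ M.accept).Nonempty ↔ w ∈ M.acceptsFrom S := by
  simp only [NFA.mem_acceptsFrom, Set.Nonempty, Set.mem_inter_iff, and_comm]

theorem NFA.mem_acceptsFrom_iff_exists_singleton {α σ : Type*} {M : NFA α σ} {S : Set σ}
    {w : List α} : w ∈ M.acceptsFrom S ↔ ∃ s ∈ S, w ∈ M.acceptsFrom {s} := by
  constructor
  · rintro ⟨f, hf, hfS⟩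
    obtain ⟨s, hs, h⟩ := NFA.mem_evalFrom_iff_exists.mp hfS
    exact ⟨s, hs, f, hf, h⟩
  · rintro ⟨s, hs, f, hf, h⟩
    exact ⟨f, hf, NFA.mem_evalFrom_iff_exists.mpr ⟨s, hs, h⟩⟩

theorem NFA.exists_separating_word_of_singletons {α σ : Type*} {M : NFA α σ}
    (h : ∀ s, ∃ w, ∀ t, w ∈ M.acceptsFrom {t} ↔ t = s) {S T : Set σ} (hST : S ≠ T) :
    ∃ w, ¬(w ∈ M.acceptsFrom S ↔ w ∈ M.acceptsFrom T) := by
  obtain ⟨s, hs⟩ : ∃ s, ¬(s ∈ S ↔ s ∈ T) := by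
    by_contra! hall
    exact hST (Set.ext hall)
  obtain ⟨w, hw⟩ := h s
  have hmem : ∀ U : Set σ, w ∈ M.acceptsFrom U ↔ s ∈ U := fun U => by
    simp only [NFA.mem_acceptsFrom_iff_exists_singleton, hw, exists_eq_right]
  exact ⟨w, by rwa [hmem, hmem]⟩

theorem add_sub_mod_eq_pred_iff {n a b : ℕ} (ha : a < n) (hb : b < n) :
    (a + (n - 1 - b)) % n = n - 1 ↔ a = b := by
  rcases lt_or_ge (a + (n - 1 - b)) n with h | h
  · rw [Nat.mod_eq_of_lt h]
    omega
  · rw [Nat.mod_eq_sub_mod h, Nat.mod_eq_of_lt (by omega)]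
    omega

namespace DFA

variable {α σ : Type*} {x : α}

theorem evalFrom_replicate_of_step_eq (M : DFA α σ) {c : σ} (hx : ∀ p, M.step p x = c) (p : σ)
    {s : ℕ} (hs : s ≠ 0) : M.evalFrom p (List.replicate s x) = c := by
  obtain ⟨s, rfl⟩ := Nat.exists_eq_succ_of_ne_zero hs
  rw [List.replicate_succ', evalFrom_append_singleton, hx]

theorem val_evalFrom_replicate_of_cyclic {m : ℕ} {M : DFA α (Fin m)}
    (hx : ∀ p, (M.step p x).val = (p.val + 1) % m) (p : Fin m) (s : ℕ) :
    (M.evalFrom p (List.replicate s x)).val = (p.val + s) % m := by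
  induction s with
  | zero => exact (Nat.mod_eq_of_lt p.isLt).symm
  | succ s ih =>
    rw [List.replicate_succ', evalFrom_append_singleton, hx, ih, Nat.mod_add_mod, Nat.add_assoc]

theorem le_card_of_replicate_mem_accepts_iff [Fintype σ] {m : ℕ} (M : DFA α σ)
    (h : ∀ k, List.replicate k x ∈ M.accepts ↔ k % m = m - 1) : m ≤ Fintype.card σ := by
  have hinj : Function.Injective fun k : Fin m => M.eval (List.replicate k x) := by
    intro k k' (hkk' : M.eval (List.replicate k x) = M.eval (List.replicate k' x))
    have hacc : ∀ j : Fin m,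
        M.evalFrom (M.eval (List.replicate j x)) (List.replicate (m - 1 - k) x) ∈ M.accept ↔
          j = k := fun j => by
      rw [eval, ← evalFrom_of_append, ← List.replicate_add, ← eval, ← mem_accepts, h,
        add_sub_mod_eq_pred_iff j.isLt k.isLt, Fin.val_inj]
    exact ((hacc k').mp (hkk' ▸ (hacc k).mpr rfl)).symm
  simpa using Fintype.card_le_of_injective _ hinj

theorem isStateComplexity_accepts_of_replicate_mem_accepts_iff {m : ℕ} (M : DFA α (Fin m))
    (h : ∀ k, List.replicate k x ∈ M.accepts ↔ k % m = m - 1) : IsStateComplexity M.accepts m :=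
  ⟨⟨Fin m, inferInstance, M, rfl, Fintype.card_fin m⟩,
    fun _ _ M' hM' => M'.le_card_of_replicate_mem_accepts_iff (hM' ▸ h)⟩

end DFA

namespace ShuffleWitness

/-- The letters `a, b, c` are `0, 1, 2`. -/
def K (m : ℕ) (hm : 2 ≤ m) : DFA (Fin 3) (Fin m) where
  step p x := if x = 1 then ⟨0, by omega⟩ else ⟨(p.val + 1) % m, Nat.mod_lt _ (by omega)⟩
  start := ⟨0, by omega⟩
  accept := {p | p.val = m - 1}

def L (n : ℕ) (hn : 2 ≤ n) : DFA (Fin 3) (Fin n) where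
  step q x := if x = 1 then ⟨(q.val + 1) % n, Nat.mod_lt _ (by omega)⟩
    else if x = 0 then ⟨0, by omega⟩ else ⟨1, by omega⟩
  start := ⟨0, by omega⟩
  accept := {q | q.val = n - 1}

section

variable {m : ℕ} (hm : 2 ≤ m)

theorem mem_K_accept (p : Fin m) : p ∈ (K m hm).accept ↔ p.val = m - 1 := Iff.rfl

theorem K_val_step_of_ne_one {x : Fin 3} (hx : x ≠ 1) (p : Fin m) :
    ((K m hm).step p x).val = (p.val + 1) % m := by
  simp [K, hx]

theorem K_step_one (p : Fin m) : (K m hm).step p 1 = ⟨0, by omega⟩ := by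
  simp [K]

theorem isStateComplexity_K : IsStateComplexity (K m hm).accepts m := by
  refine DFA.isStateComplexity_accepts_of_replicate_mem_accepts_iff (x := 0) _ fun k => ?_
  rw [DFA.mem_accepts, DFA.eval, mem_K_accept,
    DFA.val_evalFrom_replicate_of_cyclic (K_val_step_of_ne_one hm (by decide))]
  exact iff_of_eq (congrArg (· % m = m - 1) (Nat.zero_add k))

end

section

variable {n : ℕ} (hn : 2 ≤ n)

theorem mem_L_accept (q : Fin n) : q ∈ (L n hn).accept ↔ q.val = n - 1 := Iff.rfl

theorem L_val_step_one (q : Fin n) : ((L n hn).step q 1).val = (q.val + 1) % n := by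
  simp [L]

theorem L_step_zero (q : Fin n) : (L n hn).step q 0 = ⟨0, by omega⟩ := by
  simp [L]

theorem L_step_two (q : Fin n) : (L n hn).step q 2 = ⟨1, by omega⟩ := by
  simp [L]

theorem isStateComplexity_L : IsStateComplexity (L n hn).accepts n := by
  refine DFA.isStateComplexity_accepts_of_replicate_mem_accepts_iff (x := 1) _ fun k => ?_
  rw [DFA.mem_accepts, DFA.eval, mem_L_accept,
    DFA.val_evalFrom_replicate_of_cyclic (L_val_step_one hn)]
  exact iff_of_eq (congrArg (· % n = n - 1) (Nat.zero_add k))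

end

theorem exists_word_shuffle_acceptsFrom_iff {m n : ℕ} (hm : 2 ≤ m) (hn : 2 ≤ n) (i : Fin m)
    (j : Fin n) :
    ∃ w, ∀ p q, w ∈ shuffleLang ((K m hm).acceptsFrom p) ((L n hn).acceptsFrom q) ↔
      (p, q) = (i, j) := by
  obtain ⟨x, r, hx, hxL, hrj⟩ : ∃ x r, x ≠ 1 ∧ (∀ q, (L n hn).step q x = r) ∧ r ≠ j := by
    by_cases hj : j.val = 0
    · exact ⟨2, ⟨1, by omega⟩, by decide, L_step_two hn, fun h => by simp [← h] at hj⟩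
    · exact ⟨0, ⟨0, by omega⟩, by decide, L_step_zero hn, fun h => hj (by simp [← h])⟩
  have hKx := DFA.val_evalFrom_replicate_of_cyclic (K_val_step_of_ne_one hm hx)
  have hLb := DFA.val_evalFrom_replicate_of_cyclic (L_val_step_one hn)
  refine ⟨List.replicate (m - 1 - i.val) x ++ List.replicate (n - 1 - j.val) 1, fun p q => ?_⟩
  constructor
  · rintro ⟨u, hu, v, hv, huv⟩
    obtain ⟨u₁, u₂, v₁, v₂, rfl, rfl, h₁, h₂⟩ := huv.of_append
    obtain ⟨s₁, s₂, rfl, rfl, hs⟩ := h₁.of_replicate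
    obtain ⟨t₁, t₂, rfl, rfl, ht⟩ := h₂.of_replicate
    rw [DFA.mem_acceptsFrom, DFA.evalFrom_of_append, mem_K_accept] at hu
    rw [DFA.mem_acceptsFrom, DFA.evalFrom_of_append, mem_L_accept] at hv
    have ht₁ : t₁ = 0 := by
      by_contra h
      rw [DFA.evalFrom_replicate_of_step_eq _ (K_step_one hm) _ h] at hu
      simp only at hu
      omega
    have hs₂ : s₂ = 0 := by
      by_contra h
      rw [DFA.evalFrom_replicate_of_step_eq _ hxL _ h, hLb, show t₂ = n - 1 - j.val by omega,
        add_sub_mod_eq_pred_iff r.isLt j.isLt] at hv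
      exact hrj (Fin.ext hv)
    subst ht₁ hs₂
    rw [List.replicate_zero, DFA.evalFrom_nil, hKx, show s₁ = m - 1 - i.val by omega,
      add_sub_mod_eq_pred_iff p.isLt i.isLt] at hu
    rw [List.replicate_zero, DFA.evalFrom_nil, hLb, show t₂ = n - 1 - j.val by omega,
      add_sub_mod_eq_pred_iff q.isLt j.isLt] at hv
    rw [Fin.ext hu, Fin.ext hv]
  · rw [Prod.mk.injEq]
    rintro ⟨rfl, rfl⟩
    refine ⟨_, ?_, _, ?_, IsShuffleOf.append _ _⟩
    · rw [DFA.mem_acceptsFrom, mem_K_accept, hKx, add_sub_mod_eq_pred_iff p.isLt p.isLt]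
    · rw [DFA.mem_acceptsFrom, mem_L_accept, hLb, add_sub_mod_eq_pred_iff q.isLt q.isLt]

end ShuffleWitness

open ShuffleWitness

/-- For all `m, n ≥ 2` there are languages over a three-letter alphabet, given by
minimal complete DFAs with `m` and `n` states (so `κ(K) = m`, `κ(L) = n`), such that
in the subset automaton of the shuffle NFA `𝒩` no two distinct subsets of
`Q_K × Q_L` are equivalent; in particular all `2^(mn)` subsets are pairwise
distinguishable. -/
theorem stmt_16 (m n : ℕ) (hm : 2 ≤ m) (hn : 2 ≤ n) :
    ∃ (K : DFA (Fin 3) (Fin m)) (L : DFA (Fin 3) (Fin n)),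
      IsStateComplexity K.accepts m ∧ IsStateComplexity L.accepts n ∧
      ∀ S T : Set (Fin m × Fin n), S ≠ T →
        ∃ w : List (Fin 3),
          ¬ (((shuffleNFA K L).evalFrom S w ∩ (shuffleNFA K L).accept).Nonempty ↔
             ((shuffleNFA K L).evalFrom T w ∩ (shuffleNFA K L).accept).Nonempty) := by
  refine ⟨K m hm, L n hn, isStateComplexity_K hm, isStateComplexity_L hn, fun S T hST => ?_⟩
  simp only [NFA.evalFrom_inter_accept_nonempty_iff]
  refine NFA.exists_separating_word_of_singletons (fun ⟨i, j⟩ => ?_) hST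
  obtain ⟨w, hw⟩ := exists_word_shuffle_acceptsFrom_iff hm hn i j
  exact ⟨w, fun ⟨p, q⟩ => by rw [shuffleNFA_acceptsFrom_singleton, hw]⟩
end

section
/- Let Σ = {a, b, c, d}. Let K be the language of the two-state complete DFA 𝒦 with states {1,2}, initial state 1, final state 2, and transitions: from 1, letters a, b, c go to 2 and d loops on 1; from 2, letters b, c, d go to 1 and a loops on 2. Let L be the language of the two-state complete DFA ℒ with states {1,2}, initial state 1, final state 2, and transitions: from 1, letters a, c, d go to 2 and b loops on 1; from 2, letters a, b, c, d all go to 1. Then κ(K) = 2, κ(L) = 2, and κ(K ⧢ L) = 10 = f(2,2). -/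
/-- The witness DFA `𝒦` of Fig. 1 over `Σ = {a,b,c,d}` (encoded as `Fin 4`, with
`a = 0`, `b = 1`, `c = 2`, `d = 3`) and states `{1,2}` encoded as `Fin 2` (state 1
is `0`): from state 1 letters `a,b,c` go to 2 and `d` loops; from state 2 letters
`b,c,d` go to 1 and `a` loops. The initial state is 1; the final state is 2. -/
def witnessK : DFA (Fin 4) (Fin 2) where
  step := fun p x =>
    if p = 0 then (if x = 3 then 0 else 1) else (if x = 0 then 1 else 0)
  start := 0
  accept := {1}

/-- The witness DFA `ℒ` of Fig. 1: from state 1 letters `a,c,d` go to 2 and `b`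
loops; from state 2 all letters go to 1. The initial state is 1; the final state
is 2. -/
def witnessL : DFA (Fin 4) (Fin 2) where
  step := fun p x =>
    if p = 0 then (if x = 1 then 0 else 1) else 0
  start := 0
  accept := {1}

/-! ### Auxiliary material -/

/-- Characterization of the states reachable in the shuffle NFA. -/
theorem shuffleNFA_mem_evalFrom {α σK σL : Type*} (K : DFA α σK) (L : DFA α σL) :
    ∀ (w : List α) (S : Set (σK × σL)) (p : σK) (q : σL),
      (p, q) ∈ (shuffleNFA K L).evalFrom S w ↔
      ∃ p0 q0, (p0, q0) ∈ S ∧ ∃ u v, IsShuffleOf u v w ∧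
        K.evalFrom p0 u = p ∧ L.evalFrom q0 v = q := by
  intro w
  induction w with
  | nil =>
    intro S p q
    constructor
    · intro h
      exact ⟨p, q, h, [], [], .nil, rfl, rfl⟩
    · rintro ⟨p0, q0, h, u, v, hs, hu, hv⟩
      cases hs
      simp only [DFA.evalFrom_nil] at hu hv
      subst hu; subst hv
      exact h
  | cons a w ih =>
    intro S p q
    show (p, q) ∈ (shuffleNFA K L).evalFrom ((shuffleNFA K L).stepSet S a) w ↔ _
    rw [ih]
    constructor
    · rintro ⟨p0, q0, h0, u, v, hs, hu, hv⟩
      rw [NFA.mem_stepSet] at h0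
      obtain ⟨x, h1, hstep⟩ := h0
      simp only [shuffleNFA, Set.mem_insert_iff, Set.mem_singleton_iff] at hstep
      rcases hstep with heq | heq
      · injection heq with e1 e2
        subst e1; subst e2
        exact ⟨x.1, x.2, h1, a :: u, v, .left hs, hu, hv⟩
      · injection heq with e1 e2
        subst e1; subst e2
        exact ⟨x.1, x.2, h1, u, a :: v, .right hs, hu, hv⟩
    · rintro ⟨p0, q0, h0, u, v, hs, hu, hv⟩
      cases hs with
      | left h =>
        refine ⟨K.step p0 a, q0, ?_, _, v, h, hu, hv⟩
        rw [NFA.mem_stepSet]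
        exact ⟨(p0, q0), h0, Or.inl rfl⟩
      | right h =>
        refine ⟨p0, L.step q0 a, ?_, u, _, h, hu, hv⟩
        rw [NFA.mem_stepSet]
        exact ⟨(p0, q0), h0, Or.inr rfl⟩

/-- The shuffle NFA recognizes the shuffle of the two languages. -/
theorem shuffleNFA_accepts_s19 {α σK σL : Type*} (K : DFA α σK) (L : DFA α σL) :
    (shuffleNFA K L).accepts = shuffleLang K.accepts L.accepts := by
  ext w
  rw [NFA.mem_accepts]
  constructor
  · rintro ⟨⟨p, q⟩, ⟨hp, hq⟩, hmem⟩
    rw [shuffleNFA_mem_evalFrom] at hmem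
    obtain ⟨p0, q0, h0, u, v, hs, hu, hv⟩ := hmem
    have h0' : (p0, q0) = (K.start, L.start) := h0
    injection h0' with e1 e2
    subst e1; subst e2
    refine ⟨u, ?_, v, ?_, hs⟩
    · show K.evalFrom K.start u ∈ K.accept
      rw [hu]; exact hp
    · show L.evalFrom L.start v ∈ L.accept
      rw [hv]; exact hq
  · rintro ⟨u, hu, v, hv, hs⟩
    refine ⟨(K.eval u, L.eval v), ⟨hu, hv⟩, ?_⟩
    rw [shuffleNFA_mem_evalFrom]
    exact ⟨K.start, L.start, rfl, u, v, hs, rfl, rfl⟩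

/-- The subsets of `Fin 2 × Fin 2` that are reachable in the subset construction. -/
def subs : Fin 10 → List (Fin 2 × Fin 2)
  | 0 => [(0,0)]
  | 1 => [(0,1),(1,0)]
  | 2 => [(0,0),(1,0)]
  | 3 => [(0,0),(0,1)]
  | 4 => [(0,0),(1,0),(1,1)]
  | 5 => [(0,0),(1,1)]
  | 6 => [(0,0),(0,1),(1,1)]
  | 7 => [(0,1),(1,0),(1,1)]
  | 8 => [(0,0),(0,1),(1,0),(1,1)]
  | 9 => [(0,0),(0,1),(1,0)]

/-- The embedding of the 10 states into sets of NFA states. -/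
def eS (s : Fin 10) : Set (Fin 2 × Fin 2) := {pq | pq ∈ subs s}

/-- Transition table of the minimal DFA of the shuffle. -/
def rows : Fin 10 → List (Fin 10)
  | 0 => [1,2,1,3]
  | 1 => [4,4,5,6]
  | 2 => [7,2,8,6]
  | 3 => [8,4,8,3]
  | 4 => [7,9,8,8]
  | 5 => [7,9,1,9]
  | 6 => [8,8,8,9]
  | 7 => [4,8,8,8]
  | 8 => [8,8,8,8]
  | 9 => [8,4,8,6]

/-- A ten-state DFA recognizing the shuffle of the witness languages. -/
def M10 : DFA (Fin 4) (Fin 10) where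
  step := fun s a => (rows s).getD a 0
  start := 0
  accept := {s | s ∈ ([4,5,6,7,8] : List (Fin 10))}

theorem step_comm (s : Fin 10) (a : Fin 4) :
    (shuffleNFA witnessK witnessL).stepSet (eS s) a = eS (M10.step s a) := by
  ext pq
  simp only [NFA.mem_stepSet, eS, Set.mem_setOf_eq, shuffleNFA, Set.mem_insert_iff,
    Set.mem_singleton_iff]
  revert s a pq
  decide

theorem eval_comm : ∀ (w : List (Fin 4)) (s : Fin 10),
    (shuffleNFA witnessK witnessL).evalFrom (eS s) w = eS (M10.evalFrom s w) := by
  intro w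
  induction w with
  | nil => intro s; rfl
  | cons a w ih =>
    intro s
    show (shuffleNFA witnessK witnessL).evalFrom
        ((shuffleNFA witnessK witnessL).stepSet (eS s) a) w = _
    rw [step_comm]
    exact ih _

theorem start_eq : (shuffleNFA witnessK witnessL).start = eS 0 := by
  ext pq
  simp only [shuffleNFA, Set.mem_singleton_iff, eS, Set.mem_setOf_eq]
  revert pq
  decide

theorem M10_accepts : M10.accepts = shuffleLang witnessK.accepts witnessL.accepts := by
  rw [← shuffleNFA_accepts_s19]
  ext w
  rw [DFA.mem_accepts, NFA.mem_accepts, start_eq, eval_comm]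
  show _ ↔ ∃ pq ∈ _, pq ∈ eS (M10.eval w)
  generalize M10.eval w = s
  simp only [shuffleNFA, Set.mem_setOf_eq, eS, witnessK, witnessL, M10,
    Set.mem_singleton_iff]
  revert s
  decide

/-- Representative words for the 10 states. -/
def Wrep : Fin 10 → List (Fin 4)
  | 0 => []
  | 1 => [0]
  | 2 => [1]
  | 3 => [3]
  | 4 => [0,0]
  | 5 => [0,2]
  | 6 => [0,3]
  | 7 => [1,0]
  | 8 => [1,2]
  | 9 => [0,0,1]

/-- Distinguishing suffixes. -/
def Dsuf : Fin 10 → Fin 10 → List (Fin 4)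
  | 0, 1 => [0] | 0, 2 => [0] | 0, 3 => [0] | 0, 9 => [0]
  | 1, 0 => [0] | 2, 0 => [0] | 3, 0 => [0] | 9, 0 => [0]
  | 1, 2 => [1] | 2, 1 => [1]
  | 1, 3 => [3] | 3, 1 => [3]
  | 1, 9 => [0,1] | 9, 1 => [0,1]
  | 2, 3 => [1] | 3, 2 => [1]
  | 2, 9 => [1] | 9, 2 => [1]
  | 3, 9 => [3] | 9, 3 => [3]
  | 4, 5 => [2] | 5, 4 => [2]
  | 4, 6 => [1] | 6, 4 => [1]
  | 4, 7 => [1] | 7, 4 => [1]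
  | 4, 8 => [1] | 8, 4 => [1]
  | 5, 6 => [1] | 6, 5 => [1]
  | 5, 7 => [1] | 7, 5 => [1]
  | 5, 8 => [1] | 8, 5 => [1]
  | 6, 7 => [3] | 7, 6 => [3]
  | 6, 8 => [3] | 8, 6 => [3]
  | 7, 8 => [0,1] | 8, 7 => [0,1]
  | _, _ => []

theorem distinguish : ∀ i j : Fin 10, i ≠ j →
    ¬ (M10.evalFrom 0 (Wrep i ++ Dsuf i j) ∈ ([4,5,6,7,8] : List (Fin 10)) ↔
       M10.evalFrom 0 (Wrep j ++ Dsuf i j) ∈ ([4,5,6,7,8] : List (Fin 10))) := by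
  decide

theorem mem_M10_accepts (w : List (Fin 4)) :
    w ∈ M10.accepts ↔ M10.evalFrom 0 w ∈ ([4,5,6,7,8] : List (Fin 10)) := Iff.rfl

theorem shuffle_lower {σ : Type} [Fintype σ] (M : DFA (Fin 4) σ)
    (h : M.accepts = shuffleLang witnessK.accepts witnessL.accepts) :
    10 ≤ Fintype.card σ := by
  have key : ∀ w : List (Fin 4), w ∈ M.accepts ↔
      M10.evalFrom 0 w ∈ ([4,5,6,7,8] : List (Fin 10)) := by
    intro w
    rw [h, ← M10_accepts, mem_M10_accepts]
  have inj : Function.Injective (fun i : Fin 10 => M.eval (Wrep i)) := by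
    intro i j hij
    by_contra hne
    apply distinguish i j hne
    have hz : ∀ z : List (Fin 4),
        (Wrep i ++ z ∈ M.accepts ↔ Wrep j ++ z ∈ M.accepts) := by
      intro z
      rw [DFA.mem_accepts, DFA.mem_accepts]
      unfold DFA.eval
      rw [DFA.evalFrom_of_append, DFA.evalFrom_of_append]
      simp only at hij
      rw [show M.evalFrom M.start (Wrep i) = M.eval (Wrep i) from rfl,
        show M.evalFrom M.start (Wrep j) = M.eval (Wrep j) from rfl, hij]
    rw [← key, ← key]
    exact hz (Dsuf i j)
  simpa using Fintype.card_le_of_injective _ inj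

theorem two_lower {σ : Type} [Fintype σ] (M : DFA (Fin 4) σ) (Lang : Language (Fin 4))
    (h : M.accepts = Lang) (h1 : [] ∉ Lang) (h2 : [(0 : Fin 4)] ∈ Lang) :
    2 ≤ Fintype.card σ := by
  have hne : M.eval [(0 : Fin 4)] ≠ M.eval [] := by
    intro he
    apply h1
    rw [← h]
    rw [← h] at h2
    rw [DFA.mem_accepts] at h2 ⊢
    rw [← he]
    exact h2
  exact Fintype.one_lt_card_iff.mpr ⟨_, _, hne⟩

theorem nil_not_mem_K : [] ∉ witnessK.accepts := by
  rw [DFA.mem_accepts]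
  show witnessK.start ∈ witnessK.accept → False
  simp [witnessK]

theorem a_mem_K : [(0 : Fin 4)] ∈ witnessK.accepts := by
  rw [DFA.mem_accepts]
  show witnessK.step witnessK.start 0 ∈ witnessK.accept
  simp [witnessK]

theorem nil_not_mem_L : [] ∉ witnessL.accepts := by
  rw [DFA.mem_accepts]
  show witnessL.start ∈ witnessL.accept → False
  simp [witnessL]

theorem a_mem_L : [(0 : Fin 4)] ∈ witnessL.accepts := by
  rw [DFA.mem_accepts]
  show witnessL.step witnessL.start 0 ∈ witnessL.accept
  simp [witnessL]

/-- For the witness languages `K` and `L` we have `κ(K) = 2`, `κ(L) = 2`, and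
`κ(K ⧢ L) = 10 = f(2,2)`. -/
theorem stmt_19 :
    IsStateComplexity witnessK.accepts 2 ∧
    IsStateComplexity witnessL.accepts 2 ∧
    IsStateComplexity (shuffleLang witnessK.accepts witnessL.accepts) 10 := by
  refine ⟨⟨⟨Fin 2, inferInstance, witnessK, rfl, by simp⟩, ?_⟩,
    ⟨⟨Fin 2, inferInstance, witnessL, rfl, by simp⟩, ?_⟩,
    ⟨⟨Fin 10, inferInstance, M10, M10_accepts, by simp⟩, ?_⟩⟩
  · intro σ _ M hM
    exact two_lower M _ hM nil_not_mem_K a_mem_K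
  · intro σ _ M hM
    exact two_lower M _ hM nil_not_mem_L a_mem_L
  · intro σ _ M hM
    exact shuffle_lower M hM
end
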